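/- arXiv:1611.08320 — 3 statements merged into one kernel-verified Lean document; each statement's English description precedes it below -/
import Mathlib

section
/- (Van der Corput, first-derivative case) Suppose φ : [a,b] → ℝ is C¹ with φ' monotone and |φ'(x)| ≥ 1 for all x ∈ (a,b), and ψ : [a,b] → ℂ is C¹. Then |∫_a^b e^{iλφ(x)} ψ(x) dx| ≤ c·λ^{-1}·( |ψ(b)| + ∫_a^b |ψ'(x)| dx ) for all λ > 0, with an absolute constant c. -/
/-!
Put `e t = exp (i λ φ t)`, so that `e = (iλ)⁻¹ (1/φ') e'`. By Darboux's theorem `φ'` has constant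
sign, and replacing `(φ, λ)` by `(-φ, -λ)` we may assume `φ' ≥ 1`; then `g = 1/φ'` is monotone
with values in `[0, 1]`. Instead of integrating by parts against `g`, which need not be
differentiable, write `g t = ∫₀¹ 1[s ≤ g t] ds`: by Fubini, `∫ g e'` is an average over `s` of the
integrals of `e'` over the level sets `{s ≤ g}`. These are intervals, so each such integral is a
difference of two values of `e` and has norm at most `2`. Hence `‖∫ₐˣ e‖ ≤ 2/λ` for all `x`, and an
integration by parts against `ψ` gives the bound with `c = 2`.
-/

open intervalIntegral
open MeasureTheory Set

section

variable {E : Type*} [NormedAddCommGroup E] [NormedSpace ℝ E] [CompleteSpace E]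

theorem Set.OrdConnected.exists_setIntegral_eq_sub_of_hasDerivAt {f f' : ℝ → E} {a b : ℝ}
    {S : Set ℝ} (hS : S.OrdConnected) (hSab : S ⊆ Icc a b) (hab : a ≤ b)
    (hf : ContinuousOn f (Icc a b)) (hf' : ∀ t ∈ Ioo a b, HasDerivAt f (f' t) t)
    (hint : IntervalIntegrable f' volume a b) :
    ∃ u ∈ Icc a b, ∃ v ∈ Icc a b, ∫ t in S, f' t = f v - f u := by
  rcases S.eq_empty_or_nonempty with rfl | hne
  · exact ⟨a, left_mem_Icc.2 hab, a, left_mem_Icc.2 hab, by simp⟩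
  have hbdd : BddBelow S := bddBelow_Icc.mono hSab
  have hbdd' : BddAbove S := bddAbove_Icc.mono hSab
  set u := sInf S
  set v := sSup S
  have huv : u ≤ v := csInf_le_csSup hne hbdd hbdd'
  have hau : a ≤ u := le_csInf hne fun t ht => (hSab ht).1
  have hvb : v ≤ b := csSup_le hne fun t ht => (hSab ht).2
  have huvab : Icc u v ⊆ Icc a b := Icc_subset_Icc hau hvb
  have hIoo : Ioo u v ⊆ S := IsConnected.Ioo_csInf_csSup_subset ⟨hne, hS.isPreconnected⟩ hbdd hbdd'
  have hae : Ioo u v =ᵐ[volume] S := by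
    refine ae_eq_of_subset_of_measure_ge hIoo ?_ measurableSet_Ioo.nullMeasurableSet
      (measure_mono hSab |>.trans_lt measure_Icc_lt_top).ne
    exact (measure_mono (subset_Icc_csInf_csSup hbdd hbdd')).trans_eq
      (measure_congr Ioo_ae_eq_Icc).symm
  refine ⟨u, huvab (left_mem_Icc.2 huv), v, huvab (right_mem_Icc.2 huv), ?_⟩
  rw [← setIntegral_congr_set hae, ← integral_Ioc_eq_integral_Ioo, ← integral_of_le huv]
  refine integral_eq_sub_of_hasDerivAt_of_le huv (hf.mono huvab)
    (fun t ht => hf' t (Ioo_subset_Ioo hau hvb ht)) (hint.mono_set ?_)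
  rwa [uIcc_of_le huv, uIcc_of_le hab]

theorem norm_setIntegral_smul_le_of_monotoneOn_or_antitoneOn {μ : Measure ℝ} [SFinite μ]
    {F : ℝ → E} {g : ℝ → ℝ} {I : Set ℝ} {C : ℝ} (hI : I.OrdConnected) (hF : IntegrableOn F I μ)
    (hg : Measurable g) (hg01 : ∀ t ∈ I, g t ∈ Icc 0 1)
    (hgm : MonotoneOn g I ∨ AntitoneOn g I)
    (hC : ∀ J ⊆ I, J.OrdConnected → ‖∫ t in J, F t ∂μ‖ ≤ C) :
    ‖∫ t in I, g t • F t ∂μ‖ ≤ C := by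
  set H : ℝ × ℝ → E := {p | p.2 ≤ g p.1}.indicator fun p => F p.1
  have hlevel : ∀ s, ∫ t in I, H (t, s) ∂μ = ∫ t in {t | s ≤ g t} ∩ I, F t ∂μ := fun s => by
    rw [← Measure.restrict_restrict (measurableSet_le measurable_const hg),
      ← MeasureTheory.integral_indicator (measurableSet_le measurable_const hg)]
    rfl
  have hlevel_ordConnected : ∀ s, ({t | s ≤ g t} ∩ I).OrdConnected := by
    refine fun s => ⟨fun x hx y hy z hz => ⟨?_, hI.out hx.2 hy.2 hz⟩⟩
    rcases hgm with hm | hm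
    · exact hx.1.trans (hm hx.2 (hI.out hx.2 hy.2 hz) hz.1)
    · exact hy.1.trans (hm (hI.out hx.2 hy.2 hz) hy.2 hz.2)
  have hslice : ∀ t ∈ I, g t • F t = ∫ s in Ioc 0 1, H (t, s) := fun t ht => by
    have hH : (fun s => H (t, s)) = (Iic (g t)).indicator fun _ => F t := rfl
    rw [hH, integral_indicator_const _ measurableSet_Iic,
      measureReal_restrict_apply measurableSet_Iic, inter_comm, Ioc_inter_Iic,
      min_eq_right (hg01 t ht).2, Real.volume_real_Ioc_of_le (hg01 t ht).1, sub_zero]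
  have hH_int : Integrable H ((μ.restrict I).prod (volume.restrict (Ioc 0 1))) := by
    refine Integrable.mono' (hF.norm.comp_fst _) ((hF.aestronglyMeasurable.comp_fst).indicator
      (measurableSet_le measurable_snd (hg.comp measurable_fst))) (ae_of_all _ fun p => ?_)
    exact norm_indicator_le_norm_self _ _
  calc ‖∫ t in I, g t • F t ∂μ‖ = ‖∫ s in Ioc 0 1, ∫ t in I, H (t, s) ∂μ‖ := by
        rw [setIntegral_congr_fun hI.measurableSet hslice]
        exact congrArg _ (integral_integral_swap hH_int)
    _ ≤ C * volume.real (Ioc (0 : ℝ) 1) := norm_setIntegral_le_of_norm_le_const measure_Ioc_lt_top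
        fun s _ => (hlevel s).symm ▸ hC _ inter_subset_right (hlevel_ordConnected s)
    _ = C := by simp

end

theorem one_le_deriv_or_deriv_le_neg_one_of_one_le_abs {φ : ℝ → ℝ} {a b : ℝ}
    (hφ : DifferentiableOn ℝ φ (Ioo a b)) (h1 : ∀ x ∈ Ioo a b, 1 ≤ |deriv φ x|) :
    (∀ x ∈ Ioo a b, 1 ≤ deriv φ x) ∨ ∀ x ∈ Ioo a b, deriv φ x ≤ -1 := by
  by_contra! ⟨⟨x, hx, hx1⟩, ⟨y, hy, hy1⟩⟩
  have hdarboux := ordConnected_Ioo.image_deriv fun t ht =>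
    hφ.differentiableAt (Ioo_mem_nhds ht.1 ht.2)
  have hx1' : deriv φ x ≤ -1 := by cases abs_cases (deriv φ x) <;> linarith [h1 x hx]
  have hy1' : 1 ≤ deriv φ y := by cases abs_cases (deriv φ y) <;> linarith [h1 y hy]
  obtain ⟨z, hz, hz0⟩ := hdarboux.out (mem_image_of_mem _ hx) (mem_image_of_mem _ hy)
    (⟨by linarith, by linarith⟩ : (0 : ℝ) ∈ Icc (deriv φ x) (deriv φ y))
  exact absurd (h1 z hz) (by norm_num [hz0])

open Complex in
theorem norm_integral_cexp_le_of_one_le_deriv {φ : ℝ → ℝ} {a b lam : ℝ} (hab : a ≤ b)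
    (hlam : lam ≠ 0) (hφc : ContinuousOn φ (Icc a b)) (hφd : DifferentiableOn ℝ φ (Ioo a b))
    (hmono : MonotoneOn (deriv φ) (Ioo a b) ∨ AntitoneOn (deriv φ) (Ioo a b))
    (h1 : ∀ x ∈ Ioo a b, 1 ≤ deriv φ x) :
    ‖∫ t in a..b, cexp (I * lam * φ t)‖ ≤ 2 * |lam|⁻¹ := by
  set e : ℝ → ℂ := fun t => cexp (I * lam * φ t)
  set e' : ℝ → ℂ := fun t => deriv φ t • (I * lam * e t)
  have hφ' : ∀ t ∈ Ioo a b, HasDerivAt φ (deriv φ t) t := fun t ht =>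
    (hφd.differentiableAt (Ioo_mem_nhds ht.1 ht.2)).hasDerivAt
  have hφ'_pos : ∀ t ∈ Ioo a b, 0 < deriv φ t := fun t ht => one_pos.trans_le (h1 t ht)
  have he : ContinuousOn e (Icc a b) := by fun_prop
  have he' : ∀ t ∈ Ioo a b, HasDerivAt e (e' t) t := fun t ht => by
    convert (((hφ' t ht).ofReal_comp).const_mul (I * lam)).cexp using 1
    simp only [e', e, real_smul]
    ring
  have he_norm : ∀ t, ‖e t‖ = 1 := fun t => by simp [e, norm_exp]
  have he'_int : IntervalIntegrable e' volume a b := by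
    refine IntervalIntegrable.smul_continuousOn ?_ (by rw [uIcc_of_le hab]; fun_prop)
    exact (intervalIntegrable_iff_integrableOn_Ioc_of_le hab).2
      (integrableOn_deriv_of_nonneg hφc hφ' fun t ht => (hφ'_pos t ht).le)
  have he_eq : ∀ t ∈ Ioo a b, e t = (I * lam)⁻¹ • ((deriv φ t)⁻¹ • e' t) := fun t ht => by
    rw [inv_smul_smul₀ (hφ'_pos t ht).ne', smul_eq_mul,
      inv_mul_cancel_left₀ (mul_ne_zero I_ne_zero (ofReal_ne_zero.2 hlam))]
  have hbound : ‖∫ t in Ioo a b, (deriv φ t)⁻¹ • e' t‖ ≤ 2 := by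
    refine norm_setIntegral_smul_le_of_monotoneOn_or_antitoneOn ordConnected_Ioo
      (he'_int.1.mono_set Ioo_subset_Ioc_self) (measurable_deriv φ).inv
      (fun t ht => ⟨inv_nonneg.2 (hφ'_pos t ht).le, inv_le_one_of_one_le₀ (h1 t ht)⟩) ?_
      fun J hJ hJc => ?_
    · refine hmono.symm.imp (fun hm x hx y hy hxy => ?_) fun hm x hx y hy hxy => ?_
      · exact inv_anti₀ (hφ'_pos y hy) (hm hx hy hxy)
      · exact inv_anti₀ (hφ'_pos x hx) (hm hx hy hxy)
    obtain ⟨u, -, v, -, hJ⟩ :=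
      hJc.exists_setIntegral_eq_sub_of_hasDerivAt (hJ.trans Ioo_subset_Icc_self) hab he he' he'_int
    rw [hJ]
    linarith [norm_sub_le (e v) (e u), he_norm u, he_norm v]
  calc ‖∫ t in a..b, e t‖ = ‖(I * lam)⁻¹ • ∫ t in Ioo a b, (deriv φ t)⁻¹ • e' t‖ := by
        rw [integral_of_le hab, integral_Ioc_eq_integral_Ioo,
          setIntegral_congr_fun measurableSet_Ioo he_eq, MeasureTheory.integral_smul]
    _ ≤ |lam|⁻¹ * 2 := by
        rw [norm_smul]
        simpa using mul_le_mul_of_nonneg_left hbound (inv_nonneg.2 (abs_nonneg lam))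
    _ = 2 * |lam|⁻¹ := mul_comm _ _

open Complex in
theorem norm_integral_cexp_le_of_one_le_abs_deriv {φ : ℝ → ℝ} {a b lam : ℝ} (hab : a ≤ b)
    (hlam : lam ≠ 0) (hφc : ContinuousOn φ (Icc a b)) (hφd : DifferentiableOn ℝ φ (Ioo a b))
    (hmono : MonotoneOn (deriv φ) (Ioo a b) ∨ AntitoneOn (deriv φ) (Ioo a b))
    (h1 : ∀ x ∈ Ioo a b, 1 ≤ |deriv φ x|) :
    ‖∫ t in a..b, cexp (I * lam * φ t)‖ ≤ 2 * |lam|⁻¹ := by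
  rcases one_le_deriv_or_deriv_le_neg_one_of_one_le_abs hφd h1 with hpos | hneg
  · exact norm_integral_cexp_le_of_one_le_deriv hab hlam hφc hφd hmono hpos
  have hderiv_neg : deriv (-φ) = -deriv φ := deriv.neg'
  have key := norm_integral_cexp_le_of_one_le_deriv (φ := -φ) (lam := -lam) hab (neg_ne_zero.2 hlam)
    hφc.neg hφd.neg (by rw [hderiv_neg]; exact hmono.symm.imp AntitoneOn.neg MonotoneOn.neg)
    (fun x hx => by simpa [hderiv_neg] using neg_le_neg (hneg x hx))
  simpa only [abs_neg, Pi.neg_apply, ofReal_neg, mul_neg, neg_mul, neg_neg] using key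

section

variable {A : Type*} [NormedRing A] [NormedAlgebra ℝ A] [CompleteSpace A]

theorem norm_integral_mul_le_of_norm_integral_le {f ψ ψ' : ℝ → A} {a b M : ℝ} (hab : a ≤ b)
    (hf : ContinuousOn f (Icc a b)) (hψ : ContinuousOn ψ (Icc a b))
    (hψ' : ∀ x ∈ Ioo a b, HasDerivAt ψ (ψ' x) x) (hψ'_int : IntervalIntegrable ψ' volume a b)
    (hM : ∀ x ∈ Icc a b, ‖∫ t in a..x, f t‖ ≤ M) :
    ‖∫ x in a..b, f x * ψ x‖ ≤ M * (‖ψ b‖ + ∫ x in a..b, ‖ψ' x‖) := by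
  set F : ℝ → A := fun x => ∫ t in a..x, f t
  have hF : ContinuousOn F (Icc a b) := by
    simpa only [uIcc_of_le hab] using
      continuousOn_primitive_interval (hf.integrableOn_Icc.mono_set (uIcc_of_le hab).subset)
  have hF' : ∀ x ∈ Ioo a b, HasDerivAt F (f x) x := fun x hx =>
    integral_hasDerivAt_right
      (ContinuousOn.intervalIntegrable_of_Icc hx.1.le (hf.mono (Icc_subset_Icc_right hx.2.le)))
      ((hf.mono Ioo_subset_Icc_self).stronglyMeasurableAtFilter isOpen_Ioo x hx)
      (hf.continuousAt (Icc_mem_nhds hx.1 hx.2))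
  have hparts : ∫ x in a..b, f x * ψ x = F b * ψ b - ∫ x in a..b, F x * ψ' x := by
    have h := integral_mul_deriv_eq_deriv_mul_of_hasDerivAt (uIcc_of_le hab ▸ hF)
      (uIcc_of_le hab ▸ hψ) (by simpa only [min_eq_left hab, max_eq_right hab] using hF')
      (by simpa only [min_eq_left hab, max_eq_right hab] using hψ')
      (hf.intervalIntegrable_of_Icc hab) hψ'_int
    rw [h, show F a = 0 from integral_same, zero_mul, sub_zero, sub_sub_cancel]
  have hFψ'_int : IntervalIntegrable (fun x => ‖F x * ψ' x‖) volume a b :=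
    (hψ'_int.continuousOn_mul (uIcc_of_le hab ▸ hF)).norm
  have hF_bound : ∀ x ∈ Icc a b, ‖F x * ψ' x‖ ≤ M * ‖ψ' x‖ := fun x hx =>
    (norm_mul_le _ _).trans (mul_le_mul_of_nonneg_right (hM x hx) (norm_nonneg _))
  calc ‖∫ x in a..b, f x * ψ x‖ ≤ ‖F b * ψ b‖ + ‖∫ x in a..b, F x * ψ' x‖ := by
        rw [hparts]; exact norm_sub_le _ _
    _ ≤ M * ‖ψ b‖ + ∫ x in a..b, M * ‖ψ' x‖ := by
        refine add_le_add ((norm_mul_le _ _).trans ?_)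
          ((intervalIntegral.norm_integral_le_integral_norm hab).trans
            (integral_mono_on hab hFψ'_int (hψ'_int.norm.const_mul M) hF_bound))
        exact mul_le_mul_of_nonneg_right (hM b (right_mem_Icc.2 hab)) (norm_nonneg _)
    _ = M * (‖ψ b‖ + ∫ x in a..b, ‖ψ' x‖) := by
        rw [intervalIntegral.integral_const_mul, mul_add]

end

theorem ContDiffOn.intervalIntegrable_deriv {E : Type*} [NormedAddCommGroup E] [NormedSpace ℝ E]
    {f : ℝ → E} {a b : ℝ} (hab : a ≤ b) (hf : ContDiffOn ℝ 1 f (Icc a b)) :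
    IntervalIntegrable (deriv f) volume a b := by
  rcases hab.eq_or_lt with rfl | hab
  · exact IntervalIntegrable.refl
  rw [intervalIntegrable_iff_integrableOn_Ioo_of_le hab.le]
  have hderivWithin := hf.continuousOn_derivWithin (uniqueDiffOn_Icc hab) le_rfl
  exact (hderivWithin.integrableOn_Icc.mono_set Ioo_subset_Icc_self).congr_fun
    (fun x hx => derivWithin_of_mem_nhds (Icc_mem_nhds hx.1 hx.2)) measurableSet_Ioo

theorem stmt_11 :
    ∃ c : ℝ, 0 < c ∧ ∀ (a b : ℝ), a < b → ∀ (φ : ℝ → ℝ) (ψ : ℝ → ℂ) (lam : ℝ),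
      0 < lam →
      ContDiffOn ℝ 1 φ (Set.Icc a b) →
      (MonotoneOn (deriv φ) (Set.Icc a b) ∨ AntitoneOn (deriv φ) (Set.Icc a b)) →
      (∀ x ∈ Set.Ioo a b, 1 ≤ |deriv φ x|) →
      ContDiffOn ℝ 1 ψ (Set.Icc a b) →
      ‖∫ x in a..b, Complex.exp (Complex.I * lam * (φ x)) * ψ x‖ ≤
        c * lam⁻¹ * (‖ψ b‖ + ∫ x in a..b, ‖deriv ψ x‖) := by
  refine ⟨2, two_pos, fun a b hab φ ψ lam hlam hφ hmono h1 hψ => ?_⟩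
  have hφd : DifferentiableOn ℝ φ (Ioo a b) :=
    (hφ.differentiableOn one_ne_zero).mono Ioo_subset_Icc_self
  have hψ' : ∀ x ∈ Ioo a b, HasDerivAt ψ (deriv ψ x) x := fun x hx =>
    (((hψ.differentiableOn one_ne_zero).mono Ioo_subset_Icc_self).differentiableAt
      (Ioo_mem_nhds hx.1 hx.2)).hasDerivAt
  have hφc := hφ.continuousOn
  refine norm_integral_mul_le_of_norm_integral_le hab.le (by fun_prop) hψ.continuousOn hψ'
    (hψ.intervalIntegrable_deriv hab.le) fun x hx => ?_
  have hsub : Ioo a x ⊆ Icc a b := Ioo_subset_Icc_self.trans (Icc_subset_Icc_right hx.2)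
  refine (norm_integral_cexp_le_of_one_le_abs_deriv hx.1 hlam.ne'
    (hφc.mono (Icc_subset_Icc_right hx.2)) (hφd.mono (Ioo_subset_Ioo_right hx.2))
    (hmono.imp (·.mono hsub) (·.mono hsub)) fun t ht => h1 t ⟨ht.1, ht.2.trans_le hx.2⟩).trans_eq ?_
  rw [abs_of_pos hlam]
end

section
/- (Van der Corput, second-derivative case) Suppose φ : [a,b] → ℝ is C² with |φ''(x)| ≥ 1 for all x ∈ (a,b), and ψ : [a,b] → ℂ is C¹. Then |∫_a^b e^{iλφ(x)} ψ(x) dx| ≤ c·λ^{-1/2}·( |ψ(b)| + ∫_a^b |ψ'(x)| dx ) for all λ > 0, with an absolute constant c. -/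
/-!
Split `[a, b]` at a point `c` where `φ'` changes sign. Since `φ'' ≥ 1`, `|φ'| ≥ δ` at distance
`≥ δ` from `c`; there the first-derivative test (integration by parts against `1 / φ'`, whose
total variation is at most `2 / δ`) bounds the oscillatory integral by `4 / (λδ)`, while the
remaining piece of length `≤ δ` is bounded trivially. The choice `δ = λ^{-1/2}` balances the two.
Abel summation (integration by parts against the primitive `∫_a^t e^{iλφ}`) then brings in the
amplitude `ψ`; the case `φ'' ≤ -1` follows by complex conjugation.
-/

open Set MeasureTheory intervalIntegral

lemma norm_cexp_I_mul_ofReal_mul (lam t : ℝ) : ‖Complex.exp (Complex.I * lam * t)‖ = 1 := by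
  simpa [mul_assoc] using Complex.norm_exp_I_mul_ofReal (lam * t)

lemma mul_rpow_neg_half_mul_self {lam : ℝ} (hlam : 0 < lam) :
    lam * lam ^ (-(1 : ℝ) / 2) * lam ^ (-(1 : ℝ) / 2) = 1 := by
  rw [mul_assoc, ← Real.rpow_add hlam]
  norm_num [Real.rpow_neg_one, hlam.ne']

lemma mapsTo_neg_Icc (a b : ℝ) : MapsTo Neg.neg (Icc (-b) (-a)) (Icc a b) :=
  fun _ hy => ⟨le_neg.2 hy.2, neg_le.1 hy.1⟩

lemma derivWithin_derivWithin_Icc_of_mem_Ioo {F : Type*} [NormedAddCommGroup F]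
    [NormedSpace ℝ F] (f : ℝ → F) {a b x : ℝ} (hx : x ∈ Ioo a b) :
    derivWithin (derivWithin f (Icc a b)) (Icc a b) x = deriv (deriv f) x := by
  rw [derivWithin_of_mem_nhds (Icc_mem_nhds hx.1 hx.2)]
  refine Filter.EventuallyEq.deriv_eq ?_
  filter_upwards [Ioo_mem_nhds hx.1 hx.2] with y hy
  exact derivWithin_of_mem_nhds (Icc_mem_nhds hy.1 hy.2)

lemma ContinuousOn.one_le_or_le_neg_one {a b : ℝ} {g : ℝ → ℝ} (hab : a < b)
    (hg : ContinuousOn g (Icc a b)) (h : ∀ x ∈ Ioo a b, 1 ≤ |g x|) :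
    (∀ x ∈ Icc a b, 1 ≤ g x) ∨ (∀ x ∈ Icc a b, g x ≤ -1) := by
  have habs : ∀ x ∈ Icc a b, 1 ≤ |g x| := fun x hx => by
    rw [← closure_Ioo hab.ne] at hx
    exact ContinuousWithinAt.closure_le hx continuousWithinAt_const
      ((hg.abs x (closure_Ioo hab.ne ▸ hx)).mono Ioo_subset_Icc_self) h
  by_contra! hcon
  obtain ⟨⟨x, hx, hgx⟩, ⟨y, hy, hgy⟩⟩ := hcon
  have hzero : (0 : ℝ) ∈ Icc (g x) (g y) :=
    ⟨by rcases le_abs.1 (habs x hx) with h | h <;> linarith,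
     by rcases le_abs.1 (habs y hy) with h | h <;> linarith⟩
  obtain ⟨z, hz, hz0⟩ := isPreconnected_Icc.intermediate_value hx hy hg hzero
  have := habs z hz
  rw [hz0, abs_zero] at this
  exact zero_lt_one.not_ge this

theorem norm_integral_mul_le_of_norm_primitive_le {a b M : ℝ} {e ψ ψ' : ℝ → ℂ} (hab : a ≤ b)
    (he : ContinuousOn e (Icc a b)) (hM : ∀ t ∈ Icc a b, ‖∫ x in a..t, e x‖ ≤ M)
    (hψ : ∀ x ∈ Icc a b, HasDerivWithinAt ψ (ψ' x) (Icc a b) x)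
    (hψ' : IntervalIntegrable ψ' volume a b) :
    ‖∫ x in a..b, e x * ψ x‖ ≤ M * (‖ψ b‖ + ∫ x in a..b, ‖ψ' x‖) := by
  set F : ℝ → ℂ := fun t => ∫ x in a..t, e x
  have hIcc : uIcc a b = Icc a b := uIcc_of_le hab
  have he_int : IntervalIntegrable e volume a b := he.intervalIntegrable_of_Icc hab
  have hF : ∀ x ∈ Ioo (min a b) (max a b), HasDerivAt F (e x) x := fun x hx => by
    rw [min_eq_left hab, max_eq_right hab] at hx
    exact integral_hasDerivAt_right
      (he_int.mono_set (uIcc_subset_uIcc left_mem_uIcc (hIcc ▸ Ioo_subset_Icc_self hx)))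
      ((he.mono Ioo_subset_Icc_self).stronglyMeasurableAtFilter isOpen_Ioo x hx)
      ((he x (Ioo_subset_Icc_self hx)).continuousAt (Icc_mem_nhds hx.1 hx.2))
  have parts := integral_mul_deriv_eq_deriv_mul_of_hasDerivAt
    (hIcc ▸ fun x hx => (hψ x hx).continuousWithinAt)
    (continuousOn_primitive_interval (hIcc ▸ he.integrableOn_Icc))
    (fun x hx => by
      rw [min_eq_left hab, max_eq_right hab] at hx
      exact (hψ x (Ioo_subset_Icc_self hx)).hasDerivAt (Icc_mem_nhds hx.1 hx.2))
    hF hψ' he_int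
  rw [show F a = 0 from integral_same, mul_zero, sub_zero] at parts
  calc ‖∫ x in a..b, e x * ψ x‖ = ‖ψ b * F b - ∫ x in a..b, ψ' x * F x‖ := by
        rw [← parts]; simp_rw [mul_comm]
    _ ≤ ‖ψ b * F b‖ + ‖∫ x in a..b, ψ' x * F x‖ := norm_sub_le _ _
    _ ≤ ‖ψ b‖ * M + ∫ x in a..b, ‖ψ' x‖ * M :=
        add_le_add (norm_mul_le_of_le le_rfl (hM b (right_mem_Icc.2 hab)))
          (norm_integral_le_of_norm_le hab
            (ae_of_all _ fun x hx => norm_mul_le_of_le le_rfl (hM x (Ioc_subset_Icc_self hx)))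
            (hψ'.norm.mul_const M))
    _ = M * (‖ψ b‖ + ∫ x in a..b, ‖ψ' x‖) := by
        rw [intervalIntegral.integral_mul_const]; ring

section Phase

variable {a b lam : ℝ} {φ φ' φ'' : ℝ → ℝ}

lemma HasDerivWithinAt.cexp_I_mul_ofReal {s : Set ℝ} {x d : ℝ} (h : HasDerivWithinAt φ d s x) :
    HasDerivWithinAt (fun y => Complex.exp (Complex.I * lam * φ y))
      (Complex.exp (Complex.I * lam * φ x) * (Complex.I * lam * d)) s x :=
  (h.ofReal_comp.const_mul (Complex.I * lam)).cexp

lemma ContinuousOn.cexp_I_mul_ofReal {s : Set ℝ} (hφ : ContinuousOn φ s) :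
    ContinuousOn (fun x => Complex.exp (Complex.I * lam * φ x)) s := by
  fun_prop

lemma norm_integral_cexp_I_mul_le_abs_sub (lam : ℝ) (φ : ℝ → ℝ) (a b : ℝ) :
    ‖∫ x in a..b, Complex.exp (Complex.I * lam * φ x)‖ ≤ |b - a| := by
  simpa using norm_integral_le_of_norm_le_const (C := 1)
    fun x _ => (norm_cexp_I_mul_ofReal_mul lam (φ x)).le

lemma sub_le_sub_of_one_le_deriv (hφ' : ∀ x ∈ Icc a b, HasDerivWithinAt φ' (φ'' x) (Icc a b) x)
    (h1 : ∀ x ∈ Ioo a b, 1 ≤ φ'' x) {x y : ℝ} (hx : x ∈ Icc a b) (hy : y ∈ Icc a b)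
    (hxy : x ≤ y) : y - x ≤ φ' y - φ' x := by
  have hderiv : ∀ z ∈ interior (Icc a b), HasDerivAt φ' (φ'' z) z := fun z hz => by
    rw [interior_Icc] at hz
    exact (hφ' z (Ioo_subset_Icc_self hz)).hasDerivAt (Icc_mem_nhds hz.1 hz.2)
  simpa using (convex_Icc a b).mul_sub_le_image_sub_of_le_deriv (C := 1)
    (HasDerivWithinAt.continuousOn hφ')
    (fun z hz => (hderiv z hz).differentiableAt.differentiableWithinAt)
    (fun z hz => by rw [(hderiv z hz).deriv]; rw [interior_Icc] at hz; exact h1 z hz)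
    x hx y hy hxy

lemma hasDerivWithinAt_comp_neg_Icc {f f' : ℝ → ℝ}
    (hf : ∀ x ∈ Icc a b, HasDerivWithinAt f (f' x) (Icc a b) x) :
    ∀ x ∈ Icc (-b) (-a), HasDerivWithinAt (fun y => f (-y)) (-f' (-x)) (Icc (-b) (-a)) x :=
  fun x hx => ((hf (-x) (mapsTo_neg_Icc a b hx)).scomp x (hasDerivWithinAt_neg x _)
    (mapsTo_neg_Icc a b)).congr_deriv (by simp)

theorem norm_integral_cexp_le_of_le_abs_deriv {δ : ℝ} (hab : a ≤ b) (hlam : 0 < lam)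
    (hδ : 0 < δ) (hφ : ∀ x ∈ Icc a b, HasDerivWithinAt φ (φ' x) (Icc a b) x)
    (hφ' : ∀ x ∈ Icc a b, HasDerivWithinAt φ' (φ'' x) (Icc a b) x)
    (hφ''c : ContinuousOn φ'' (Icc a b)) (hφ'' : ∀ x ∈ Icc a b, 0 ≤ φ'' x)
    (hφ'δ : ∀ x ∈ Icc a b, δ ≤ |φ' x|) :
    ‖∫ x in a..b, Complex.exp (Complex.I * lam * φ x)‖ ≤ 4 / (lam * δ) := by
  have hφ'0 : ∀ x ∈ Icc a b, φ' x ≠ 0 := fun x hx h0 => by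
    have := hφ'δ x hx; rw [h0, abs_zero] at this; linarith
  have hlam' : (lam : ℂ) ≠ 0 := Complex.ofReal_ne_zero.2 hlam.ne'
  have hIcc : uIcc a b = Icc a b := uIcc_of_le hab
  set e : ℝ → ℂ := fun x => Complex.exp (Complex.I * lam * φ x)
  -- integrate `e = u * v'` by parts
  set v : ℝ → ℂ := fun x => e x / (Complex.I * lam)
  set u : ℝ → ℝ := fun x => (φ' x)⁻¹
  set u' : ℝ → ℝ := fun x => -φ'' x / φ' x ^ 2
  have hu : ∀ x ∈ Icc a b, HasDerivWithinAt u (u' x) (Icc a b) x := fun x hx =>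
    (hφ' x hx).inv (hφ'0 x hx)
  have hv : ∀ x ∈ Icc a b, HasDerivWithinAt v (e x * φ' x) (Icc a b) x := fun x hx => by
    refine ((hφ x hx).cexp_I_mul_ofReal.div_const (Complex.I * lam)).congr_deriv ?_
    simp only [e]
    field_simp
  have hu'c : ContinuousOn u' (Icc a b) :=
    hφ''c.neg.div (HasDerivWithinAt.continuousOn hφ' |>.pow 2)
      fun x hx => pow_ne_zero 2 (hφ'0 x hx)
  have hec : ContinuousOn e (Icc a b) := (HasDerivWithinAt.continuousOn hφ).cexp_I_mul_ofReal
  have hnorm_v : ∀ x, ‖v x‖ = lam⁻¹ := fun x => by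
    simp [v, e, norm_cexp_I_mul_ofReal_mul, abs_of_pos hlam]
  have hu_le : ∀ x ∈ Icc a b, |u x| ≤ δ⁻¹ := fun x hx => by
    simpa [u] using inv_anti₀ hδ (hφ'δ x hx)
  have parts : ∫ x in a..b, e x = u b * v b - u a * v a - ∫ x in a..b, (u' x : ℂ) * v x := by
    rw [← integral_mul_deriv_eq_deriv_mul_of_hasDerivWithinAt (u := fun x => (u x : ℂ))
      (u' := fun x => (u' x : ℂ)) (v' := fun x => e x * φ' x)
      (hIcc ▸ fun x hx => (hu x hx).ofReal_comp) (hIcc ▸ hv)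
      ((Complex.continuous_ofReal.comp_continuousOn hu'c).intervalIntegrable_of_Icc hab)
      ((hec.mul (Complex.continuous_ofReal.comp_continuousOn
        (HasDerivWithinAt.continuousOn hφ'))).intervalIntegrable_of_Icc hab)]
    refine integral_congr fun x hx => ?_
    have : (φ' x : ℂ) ≠ 0 := Complex.ofReal_ne_zero.2 (hφ'0 x (hIcc ▸ hx))
    simp only [u, Complex.ofReal_inv]
    field_simp
  -- `u` is monotone, so its total variation is `u a - u b`
  have hvariation : ∫ x in a..b, -u' x = u a - u b := by
    rw [intervalIntegral.integral_neg, integral_eq_sub_of_hasDerivAt_of_le hab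
      (HasDerivWithinAt.continuousOn hu)
      (fun x hx => (hu x (Ioo_subset_Icc_self hx)).hasDerivAt (Icc_mem_nhds hx.1 hx.2))
      (ContinuousOn.intervalIntegrable_of_Icc hab hu'c)]
    ring
  have hrest : ‖∫ x in a..b, (u' x : ℂ) * v x‖ ≤ (u a - u b) / lam := by
    calc ‖∫ x in a..b, (u' x : ℂ) * v x‖ ≤ ∫ x in a..b, -u' x / lam := by
          refine norm_integral_le_of_norm_le hab (ae_of_all _ fun x hx => ?_)
            (ContinuousOn.intervalIntegrable_of_Icc hab (hu'c.neg.div_const lam))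
          have : u' x ≤ 0 := div_nonpos_of_nonpos_of_nonneg
            (neg_nonpos.2 (hφ'' x (Ioc_subset_Icc_self hx))) (sq_nonneg _)
          rw [norm_mul, hnorm_v, Complex.norm_real, Real.norm_eq_abs, abs_of_nonpos this,
            div_eq_mul_inv]
      _ = (u a - u b) / lam := by rw [intervalIntegral.integral_div, hvariation]
  have ha := hu_le a (left_mem_Icc.2 hab)
  have hb := hu_le b (right_mem_Icc.2 hab)
  calc ‖∫ x in a..b, e x‖
      ≤ ‖(u b : ℂ) * v b‖ + ‖(u a : ℂ) * v a‖ + ‖∫ x in a..b, (u' x : ℂ) * v x‖ := by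
        rw [parts]; exact norm_sub_le_of_le (norm_sub_le _ _) le_rfl
    _ ≤ |u b| / lam + |u a| / lam + (|u a| + |u b|) / lam := by
        simp only [norm_mul, hnorm_v, Complex.norm_real, Real.norm_eq_abs, ← div_eq_mul_inv]
        refine add_le_add le_rfl (hrest.trans ?_)
        gcongr
        linarith [le_abs_self (u a), neg_abs_le (u b)]
    _ ≤ 4 * δ⁻¹ / lam := by
        rw [← add_div, ← add_div]
        gcongr
        linarith
    _ = 4 / (lam * δ) := by field_simp

theorem norm_integral_cexp_le_of_deriv_left_nonneg (hab : a ≤ b) (hlam : 0 < lam)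
    (hφ : ∀ x ∈ Icc a b, HasDerivWithinAt φ (φ' x) (Icc a b) x)
    (hφ' : ∀ x ∈ Icc a b, HasDerivWithinAt φ' (φ'' x) (Icc a b) x)
    (hφ''c : ContinuousOn φ'' (Icc a b)) (h1 : ∀ x ∈ Icc a b, 1 ≤ φ'' x) (h0 : 0 ≤ φ' a) :
    ‖∫ x in a..b, Complex.exp (Complex.I * lam * φ x)‖ ≤ 5 * lam ^ (-(1 : ℝ) / 2) := by
  set δ := lam ^ (-(1 : ℝ) / 2)
  have hδ : 0 < δ := Real.rpow_pos_of_pos hlam _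
  rcases le_or_gt b (a + δ) with hb | hb
  · calc _ ≤ |b - a| := norm_integral_cexp_I_mul_le_abs_sub lam φ a b
      _ ≤ 5 * δ := by rw [abs_of_nonneg (sub_nonneg.2 hab)]; linarith
  have hsub : Icc (a + δ) b ⊆ Icc a b := Icc_subset_Icc (by linarith) le_rfl
  have hφ'δ : ∀ x ∈ Icc (a + δ) b, δ ≤ |φ' x| := fun x hx => by
    have := sub_le_sub_of_one_le_deriv hφ' (fun z hz => h1 z (Ioo_subset_Icc_self hz))
      (left_mem_Icc.2 hab) (hsub hx) (by linarith [hx.1])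
    exact le_abs.2 (Or.inl (by linarith [hx.1]))
  have hec : ContinuousOn (fun x => Complex.exp (Complex.I * lam * φ x)) (Icc a b) :=
    (HasDerivWithinAt.continuousOn hφ).cexp_I_mul_ofReal
  rw [← integral_add_adjacent_intervals (b := a + δ)
    ((hec.mono (Icc_subset_Icc le_rfl hb.le)).intervalIntegrable_of_Icc (by linarith))
    ((hec.mono hsub).intervalIntegrable_of_Icc hb.le)]
  calc _ ≤ _ := norm_add_le _ _
    _ ≤ |a + δ - a| + 4 / (lam * δ) := add_le_add (norm_integral_cexp_I_mul_le_abs_sub lam φ _ _)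
        (norm_integral_cexp_le_of_le_abs_deriv hb.le hlam hδ
          (fun x hx => (hφ x (hsub hx)).mono hsub) (fun x hx => (hφ' x (hsub hx)).mono hsub)
          (hφ''c.mono hsub) (fun x hx => zero_le_one.trans (h1 x (hsub hx))) hφ'δ)
    _ = 5 * δ := by
        have : lam * δ * δ = 1 := mul_rpow_neg_half_mul_self hlam
        rw [add_sub_cancel_left, abs_of_pos hδ]
        field_simp
        linear_combination (-4) * this

theorem norm_integral_cexp_le_of_deriv_right_nonpos (hab : a ≤ b) (hlam : 0 < lam)
    (hφ : ∀ x ∈ Icc a b, HasDerivWithinAt φ (φ' x) (Icc a b) x)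
    (hφ' : ∀ x ∈ Icc a b, HasDerivWithinAt φ' (φ'' x) (Icc a b) x)
    (hφ''c : ContinuousOn φ'' (Icc a b)) (h1 : ∀ x ∈ Icc a b, 1 ≤ φ'' x) (h0 : φ' b ≤ 0) :
    ‖∫ x in a..b, Complex.exp (Complex.I * lam * φ x)‖ ≤ 5 * lam ^ (-(1 : ℝ) / 2) := by
  have := norm_integral_cexp_le_of_deriv_left_nonneg (neg_le_neg hab) hlam
    (hasDerivWithinAt_comp_neg_Icc hφ)
    (by simpa using hasDerivWithinAt_comp_neg_Icc (fun x hx => (hφ' x hx).neg))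
    (hφ''c.comp continuousOn_neg (mapsTo_neg_Icc a b))
    (fun x hx => h1 (-x) (mapsTo_neg_Icc a b hx)) (by simpa using h0)
  rwa [intervalIntegral.integral_comp_neg (fun x => Complex.exp (Complex.I * lam * φ x)),
    neg_neg, neg_neg] at this

theorem norm_integral_cexp_le_of_one_le_deriv2 (hab : a ≤ b) (hlam : 0 < lam)
    (hφ : ∀ x ∈ Icc a b, HasDerivWithinAt φ (φ' x) (Icc a b) x)
    (hφ' : ∀ x ∈ Icc a b, HasDerivWithinAt φ' (φ'' x) (Icc a b) x)
    (hφ''c : ContinuousOn φ'' (Icc a b)) (h1 : ∀ x ∈ Icc a b, 1 ≤ φ'' x) :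
    ‖∫ x in a..b, Complex.exp (Complex.I * lam * φ x)‖ ≤ 10 * lam ^ (-(1 : ℝ) / 2) := by
  have hδ : 0 < lam ^ (-(1 : ℝ) / 2) := Real.rpow_pos_of_pos hlam _
  rcases le_or_gt 0 (φ' a) with ha | ha
  · linarith [norm_integral_cexp_le_of_deriv_left_nonneg hab hlam hφ hφ' hφ''c h1 ha]
  rcases le_or_gt (φ' b) 0 with hb | hb
  · linarith [norm_integral_cexp_le_of_deriv_right_nonpos hab hlam hφ hφ' hφ''c h1 hb]
  obtain ⟨c, hc, hc0⟩ := intermediate_value_Icc hab (HasDerivWithinAt.continuousOn hφ')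
    ⟨ha.le, hb.le⟩
  have hac : Icc a c ⊆ Icc a b := Icc_subset_Icc le_rfl hc.2
  have hcb : Icc c b ⊆ Icc a b := Icc_subset_Icc hc.1 le_rfl
  have hec : ContinuousOn (fun x => Complex.exp (Complex.I * lam * φ x)) (Icc a b) :=
    (HasDerivWithinAt.continuousOn hφ).cexp_I_mul_ofReal
  rw [← integral_add_adjacent_intervals
    ((hec.mono hac).intervalIntegrable_of_Icc hc.1)
    ((hec.mono hcb).intervalIntegrable_of_Icc hc.2)]
  calc _ ≤ _ := norm_add_le _ _
    _ ≤ 5 * lam ^ (-(1 : ℝ) / 2) + 5 * lam ^ (-(1 : ℝ) / 2) := add_le_add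
        (norm_integral_cexp_le_of_deriv_right_nonpos hc.1 hlam
          (fun x hx => (hφ x (hac hx)).mono hac) (fun x hx => (hφ' x (hac hx)).mono hac)
          (hφ''c.mono hac) (fun x hx => h1 x (hac hx)) hc0.le)
        (norm_integral_cexp_le_of_deriv_left_nonneg hc.2 hlam
          (fun x hx => (hφ x (hcb hx)).mono hcb) (fun x hx => (hφ' x (hcb hx)).mono hcb)
          (hφ''c.mono hcb) (fun x hx => h1 x (hcb hx)) hc0.ge)
    _ = 10 * lam ^ (-(1 : ℝ) / 2) := by ring

theorem norm_integral_cexp_le_of_one_le_abs_deriv2 (hab : a ≤ b) (hlam : 0 < lam)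
    (hφ : ∀ x ∈ Icc a b, HasDerivWithinAt φ (φ' x) (Icc a b) x)
    (hφ' : ∀ x ∈ Icc a b, HasDerivWithinAt φ' (φ'' x) (Icc a b) x)
    (hφ''c : ContinuousOn φ'' (Icc a b))
    (h1 : (∀ x ∈ Icc a b, 1 ≤ φ'' x) ∨ (∀ x ∈ Icc a b, φ'' x ≤ -1)) :
    ‖∫ x in a..b, Complex.exp (Complex.I * lam * φ x)‖ ≤ 10 * lam ^ (-(1 : ℝ) / 2) := by
  rcases h1 with h1 | h1
  · exact norm_integral_cexp_le_of_one_le_deriv2 hab hlam hφ hφ' hφ''c h1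
  have := norm_integral_cexp_le_of_one_le_deriv2 (φ := fun x => -φ x) hab hlam
    (fun x hx => (hφ x hx).neg) (fun x hx => (hφ' x hx).neg) hφ''c.neg
    (fun x hx => le_neg_of_le_neg (h1 x hx))
  have hconj : ∫ x in a..b, Complex.exp (Complex.I * lam * ((-φ x : ℝ) : ℂ)) =
      (starRingEnd ℂ) (∫ x in a..b, Complex.exp (Complex.I * lam * φ x)) := by
    rw [← intervalIntegral_conj]
    refine integral_congr fun x _ => ?_
    rw [← Complex.exp_conj]
    simp [Complex.conj_I]
  rwa [hconj, RCLike.norm_conj] at this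

end Phase

theorem stmt_12 :
    ∃ c : ℝ, 0 < c ∧ ∀ (a b : ℝ), a < b → ∀ (φ : ℝ → ℝ) (ψ : ℝ → ℂ) (lam : ℝ),
      0 < lam →
      ContDiffOn ℝ 2 φ (Set.Icc a b) →
      (∀ x ∈ Set.Ioo a b, 1 ≤ |deriv (deriv φ) x|) →
      ContDiffOn ℝ 1 ψ (Set.Icc a b) →
      ‖∫ x in a..b, Complex.exp (Complex.I * lam * (φ x)) * ψ x‖ ≤
        c * lam ^ (-(1 : ℝ) / 2) * (‖ψ b‖ + ∫ x in a..b, ‖deriv ψ x‖) := by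
  refine ⟨10, by norm_num, fun a b hab φ ψ lam hlam hφ hφ'' hψ => ?_⟩
  -- `φ` is only `C²` on `Icc a b`, so `deriv` is junk at the endpoints: use `derivWithin`.
  have hU := uniqueDiffOn_Icc hab
  set φ₁ := derivWithin φ (Icc a b)
  have hφ₁ : ContDiffOn ℝ 1 φ₁ (Icc a b) := hφ.derivWithin hU (by norm_num)
  have hsign := (hφ₁.continuousOn_derivWithin hU le_rfl).one_le_or_le_neg_one hab
    fun x hx => derivWithin_derivWithin_Icc_of_mem_Ioo φ hx ▸ hφ'' x hx
  have hψ' : ∫ x in a..b, ‖deriv ψ x‖ = ∫ x in a..b, ‖derivWithin ψ (Icc a b) x‖ :=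
    integral_congr_Ioo_of_le hab.le fun x hx => by
      rw [derivWithin_of_mem_nhds (Icc_mem_nhds hx.1 hx.2)]
  rw [hψ']
  refine norm_integral_mul_le_of_norm_primitive_le hab.le hφ.continuousOn.cexp_I_mul_ofReal
    (fun t ht => ?_)
    (fun x hx => (hψ.differentiableOn one_ne_zero x hx).hasDerivWithinAt)
    ((hψ.continuousOn_derivWithin hU le_rfl).intervalIntegrable_of_Icc hab.le)
  have hsub : Icc a t ⊆ Icc a b := Icc_subset_Icc le_rfl ht.2
  exact norm_integral_cexp_le_of_one_le_abs_deriv2 ht.1 hlam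
    (fun x hx => ((hφ.differentiableOn (by norm_num) x (hsub hx)).hasDerivWithinAt).mono hsub)
    (fun x hx => ((hφ₁.differentiableOn one_ne_zero x (hsub hx)).hasDerivWithinAt).mono hsub)
    ((hφ₁.continuousOn_derivWithin hU le_rfl).mono hsub)
    (hsign.imp (fun h x hx => h x (hsub hx)) (fun h x hx => h x (hsub hx)))
end

section
/- (Uniform Bessel decay implies L² bound) Suppose J : (0,∞) → ℝ satisfies |J(r)| ≤ C·r^{-1/3}·(1 + r^{-1/3}|r − ν|)^{-1/4} for all r > 0 and some ν ≥ 0. Then for every R > 1, ‖J‖_{L²(R ≤ r ≤ 2R)} ≤ C' with C' depending only on C (not on ν or R). -/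
/-!
Dropping the `1` in the envelope gives `J(r)² ≤ C² R^(-1/2) |r - ν|^(-1/2)` on `[R, 2R]`, and
the singularity `|r - ν|^(-1/2)` has integral `O(√R)` over any interval of length `R`, wherever
`ν` lies; the two powers of `R` cancel.
-/

open MeasureTheory Set

lemma intervalIntegrable_abs_sub_rpow {p : ℝ} (hp : -1 < p) (ν a b : ℝ) :
    IntervalIntegrable (fun x : ℝ => |x - ν| ^ p) volume a b := by
  have h := ((intervalIntegral.intervalIntegrable_cpow' (r := (p : ℂ)) (a := a - ν) (b := b - ν)
    (by simpa)).norm).comp_sub_right ν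
  simp only [sub_add_cancel, Complex.norm_cpow_real, Complex.norm_real,
    Real.norm_eq_abs] at h
  exact h

lemma integrableOn_Icc_abs_sub_rpow {p : ℝ} (hp : -1 < p) (ν a b : ℝ) :
    IntegrableOn (fun x : ℝ => |x - ν| ^ p) (Icc a b) := by
  rcases le_or_gt a b with hab | hab
  · exact (intervalIntegrable_iff_integrableOn_Icc_of_le hab).mp
      (intervalIntegrable_abs_sub_rpow hp ν a b)
  · simp [Icc_eq_empty_of_lt hab]

lemma integral_abs_rpow {p : ℝ} (hp : -1 < p) {a : ℝ} (ha : 0 ≤ a) :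
    ∫ x in -a..a, |x| ^ p = 2 * a ^ (p + 1) / (p + 1) := by
  have hint := intervalIntegrable_abs_sub_rpow hp 0
  simp only [sub_zero] at hint
  have half : ∫ x in (0:ℝ)..a, |x| ^ p = a ^ (p + 1) / (p + 1) := by
    rw [intervalIntegral.integral_congr (g := fun x => x ^ p) fun x hx => by
      rw [uIcc_of_le ha] at hx; simp [abs_of_nonneg hx.1]]
    rw [integral_rpow (Or.inl hp), Real.zero_rpow (by linarith), sub_zero]
  have mirror : ∫ x in -a..0, |x| ^ p = ∫ x in (0:ℝ)..a, |x| ^ p := by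
    simpa using (intervalIntegral.integral_comp_neg (a := 0) (b := a) (fun x : ℝ => |x| ^ p)).symm
  rw [← intervalIntegral.integral_add_adjacent_intervals (hint _ _) (hint _ _), mirror, half]
  ring

lemma setIntegral_Icc_abs_sub_rpow_le {p : ℝ} (hp : -1 < p) (hp0 : p ≤ 0) (ν : ℝ) {a b : ℝ}
    (hab : a < b) :
    ∫ x in Icc a b, |x - ν| ^ p ≤ 2 * (2 * (b - a)) ^ (p + 1) / (p + 1) := by
  set L := b - a
  have hL0 : 0 < L := by linarith
  have hp1 : 0 < p + 1 := by linarith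
  -- Either `[a, b]` lies within `2L` of `ν`, or `|x - ν| ≥ L` on all of `[a, b]`.
  by_cases hnear : a - L ≤ ν ∧ ν ≤ b + L
  · calc ∫ x in Icc a b, |x - ν| ^ p
        ≤ ∫ x in Icc (ν - 2 * L) (ν + 2 * L), |x - ν| ^ p :=
          setIntegral_mono_set (integrableOn_Icc_abs_sub_rpow hp ν _ _)
            (.of_forall fun _ => by positivity)
            (Icc_subset_Icc (by linarith) (by linarith)).eventuallyLE
      _ = ∫ x in -(2 * L)..2 * L, |x| ^ p := by
          rw [integral_Icc_eq_integral_Ioc, ← intervalIntegral.integral_of_le (by linarith),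
            intervalIntegral.integral_comp_sub_right (fun x => |x| ^ p)]
          ring_nf
      _ = 2 * (2 * L) ^ (p + 1) / (p + 1) := integral_abs_rpow hp (by positivity)
  · have hfar : ∀ x ∈ Icc a b, |x - ν| ^ p ≤ L ^ p := fun x hx =>
      Real.rpow_le_rpow_of_nonpos hL0 (by cases abs_cases (x - ν) <;> grind) hp0
    calc ∫ x in Icc a b, |x - ν| ^ p
        ≤ ∫ _ in Icc a b, L ^ p :=
          setIntegral_mono_on (integrableOn_Icc_abs_sub_rpow hp ν _ _)
            (integrableOn_const (by simp)) measurableSet_Icc hfar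
      _ = L ^ (p + 1) := by
          rw [setIntegral_const, Real.volume_real_Icc_of_le hab.le, smul_eq_mul,
            Real.rpow_add_one hL0.ne', mul_comm]
      _ ≤ (2 * L) ^ (p + 1) := Real.rpow_le_rpow hL0.le (by linarith) hp1.le
      _ ≤ 2 * (2 * L) ^ (p + 1) / (p + 1) := by
          rw [le_div_iff₀ hp1]
          nlinarith [Real.rpow_nonneg (by positivity : (0:ℝ) ≤ 2 * L) (p + 1)]

lemma rpow_mul_one_add_rpow_mul_rpow_le {r t : ℝ} (hr : 0 < r) (ht : 0 < t) :
    r ^ (-(1 : ℝ) / 3) * (1 + r ^ (-(1 : ℝ) / 3) * t) ^ (-(1 : ℝ) / 4) ≤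
      r ^ (-(1 : ℝ) / 4) * t ^ (-(1 : ℝ) / 4) := by
  have hs : 0 < r ^ (-(1 : ℝ) / 3) := by positivity
  calc r ^ (-(1 : ℝ) / 3) * (1 + r ^ (-(1 : ℝ) / 3) * t) ^ (-(1 : ℝ) / 4)
      ≤ r ^ (-(1 : ℝ) / 3) * (r ^ (-(1 : ℝ) / 3) * t) ^ (-(1 : ℝ) / 4) := by
        refine mul_le_mul_of_nonneg_left ?_ hs.le
        exact Real.rpow_le_rpow_of_nonpos (mul_pos hs ht) (le_add_of_nonneg_left zero_le_one)
          (by norm_num)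
    _ = r ^ (-(1 : ℝ) / 4) * t ^ (-(1 : ℝ) / 4) := by
        rw [Real.mul_rpow hs.le ht.le, ← Real.rpow_mul hr.le, ← mul_assoc, ← Real.rpow_add hr]
        norm_num

lemma sq_le_of_abs_le_envelope {C ν R r y : ℝ} (hC : 0 ≤ C) (hR : 0 < R) (hRr : R ≤ r)
    (hrν : r ≠ ν)
    (hy : |y| ≤ C * r ^ (-(1 : ℝ) / 3) * (1 + r ^ (-(1 : ℝ) / 3) * |r - ν|) ^ (-(1 : ℝ) / 4)) :
    y ^ 2 ≤ C ^ 2 * R ^ (-(1 : ℝ) / 2) * |r - ν| ^ (-(1 : ℝ) / 2) := by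
  have hr : 0 < r := hR.trans_le hRr
  have ht : 0 < |r - ν| := abs_pos.mpr (sub_ne_zero.mpr hrν)
  have hy' : |y| ≤ C * (r ^ (-(1 : ℝ) / 4) * |r - ν| ^ (-(1 : ℝ) / 4)) := by
    rw [mul_assoc] at hy
    exact hy.trans (mul_le_mul_of_nonneg_left (rpow_mul_one_add_rpow_mul_rpow_le hr ht) hC)
  calc y ^ 2 = |y| ^ 2 := (sq_abs y).symm
    _ ≤ (C * (r ^ (-(1 : ℝ) / 4) * |r - ν| ^ (-(1 : ℝ) / 4))) ^ 2 := by gcongr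
    _ = C ^ 2 * r ^ (-(1 : ℝ) / 2) * |r - ν| ^ (-(1 : ℝ) / 2) := by
        rw [mul_pow, mul_pow, ← Real.rpow_mul_natCast hr.le, ← Real.rpow_mul_natCast ht.le,
          mul_assoc]
        norm_num
    _ ≤ C ^ 2 * R ^ (-(1 : ℝ) / 2) * |r - ν| ^ (-(1 : ℝ) / 2) := by
        gcongr ?_ * _
        exact mul_le_mul_of_nonneg_left (Real.rpow_le_rpow_of_nonpos hR hRr (by norm_num))
          (sq_nonneg C)

theorem stmt_16 (C : ℝ) (hC : 0 < C) :
    ∃ C' : ℝ, 0 < C' ∧ ∀ (ν : ℝ), 0 ≤ ν → ∀ J : ℝ → ℝ, Measurable J →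
      (∀ r : ℝ, 0 < r →
        |J r| ≤ C * r ^ (-(1 : ℝ) / 3) *
          (1 + r ^ (-(1 : ℝ) / 3) * |r - ν|) ^ (-(1 : ℝ) / 4)) →
      ∀ R : ℝ, 1 < R → (∫ r in Set.Icc R (2 * R), (J r) ^ 2) ≤ C' ^ 2 := by
  refine ⟨3 * C, by positivity, fun ν _ J _ hJ R hR => ?_⟩
  have hR0 : 0 < R := by linarith
  have hmajorant : ∀ᵐ r ∂volume.restrict (Icc R (2 * R)),
      J r ^ 2 ≤ C ^ 2 * R ^ (-(1 : ℝ) / 2) * |r - ν| ^ (-(1 : ℝ) / 2) := by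
    filter_upwards [ae_restrict_mem measurableSet_Icc, ae_restrict_of_ae (volume.ae_ne ν)]
      with r hr hrν
    exact sq_le_of_abs_le_envelope hC.le hR0 hr.1 hrν (hJ r (hR0.trans_le hr.1))
  have hsqrt : R ^ (-(1 : ℝ) / 2) * (2 * R) ^ (1 / 2 : ℝ) = √2 := by
    rw [Real.mul_rpow zero_le_two hR0.le, mul_left_comm, ← Real.rpow_add hR0, ← Real.sqrt_eq_rpow]
    norm_num
  calc ∫ r in Icc R (2 * R), J r ^ 2
      ≤ ∫ r in Icc R (2 * R), C ^ 2 * R ^ (-(1 : ℝ) / 2) * |r - ν| ^ (-(1 : ℝ) / 2) :=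
        integral_mono_of_nonneg (.of_forall fun _ => sq_nonneg _)
          ((integrableOn_Icc_abs_sub_rpow (by norm_num) ν _ _).const_mul _) hmajorant
    _ = C ^ 2 * R ^ (-(1 : ℝ) / 2) * ∫ r in Icc R (2 * R), |r - ν| ^ (-(1 : ℝ) / 2) :=
        integral_const_mul _ _
    _ ≤ C ^ 2 * R ^ (-(1 : ℝ) / 2) * (2 * (2 * (2 * R - R)) ^ (-(1 : ℝ) / 2 + 1) /
          (-(1 : ℝ) / 2 + 1)) := by
        gcongr
        exact setIntegral_Icc_abs_sub_rpow_le (by norm_num) (by norm_num) ν (by linarith)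
    _ = 4 * √2 * C ^ 2 := by
        rw [show 2 * R - R = R by ring, show -(1 : ℝ) / 2 + 1 = 1 / 2 by norm_num]
        linear_combination 4 * C ^ 2 * hsqrt
    _ ≤ (3 * C) ^ 2 := by
        have hsqrt2 : √2 ≤ 9 / 4 := Real.sqrt_le_iff.mpr ⟨by norm_num, by norm_num⟩
        nlinarith [sq_nonneg C]
end
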